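/- Let E ∈ ℝ^{k×n} be a random matrix with E[vec(E) vec(E)ᵀ] = σ² I_{kn}, let G₀ ∈ ℝ^{kn×kn} be a fixed invertible matrix, define Ẽ by vec(Ẽ) = G₀⁻¹ vec(E), and let W ∈ ℝ^{n×n} be fixed. Then E[(Ẽ ⊗ E) vec(W)] = σ²·R₂⁻¹(G₀⁻¹)·vec(W), where R₂⁻¹ is the inverse of the rearrangement operator R₂ satisfying R₂(A ⊗ B) = vec(A)vec(B)ᵀ on Kronecker products (equivalently R₂⁻¹(M) = R₁(Mᵀ)ᵀ with R₁(W ⊗ C) = vec(W)vec(C)ᵀ). -/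
import Mathlib


open Matrix

open MeasureTheory Kronecker

/-- Column-major vectorization of a matrix, as a function indexed by
(column, row) pairs. -/
def mvec {m n : ℕ} (M : Matrix (Fin m) (Fin n) ℝ) : Fin n × Fin m → ℝ :=
  fun p => M p.2 p.1

/-- The block rearrangement operator `R₁` with `R₁(W ⊗ C) = vec(W)vec(C)ᵀ`,
so that `R₂⁻¹(M) = R₁(Mᵀ)ᵀ`. -/
def R1 {n k : ℕ} (M : Matrix (Fin n × Fin k) (Fin n × Fin k) ℝ) :
    Matrix (Fin n × Fin n) (Fin k × Fin k) ℝ :=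
  Matrix.of fun p q => M (p.2, q.2) (p.1, q.1)

/-- If `E[vec(E) vec(E)ᵀ] = σ² I`, `G₀` is fixed invertible, `Ẽ` is defined by
`vec(Ẽ) = G₀⁻¹ vec(E)`, and `W` is fixed, then
`E[(Ẽ ⊗ E) vec(W)] = σ²·R₂⁻¹(G₀⁻¹)·vec(W)` where `R₂⁻¹(M) = R₁(Mᵀ)ᵀ`. -/
theorem expectation_kron_vecW (k n : ℕ) {Ω : Type*} [MeasureSpace Ω]
    (hprob : IsProbabilityMeasure (volume : Measure Ω))
    (Em : Ω → Matrix (Fin k) (Fin n) ℝ) (σ2 : ℝ)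
    (G₀ : Matrix (Fin n × Fin k) (Fin n × Fin k) ℝ)
    (hG₀ : IsUnit G₀.det)
    (W : Matrix (Fin n) (Fin n) ℝ)
    (hint : ∀ p q : Fin n × Fin k,
      Integrable (fun ω => mvec (Em ω) p * mvec (Em ω) q))
    (hcov : ∀ p q : Fin n × Fin k,
      (∫ ω, mvec (Em ω) p * mvec (Em ω) q) = if p = q then σ2 else 0)
    (Etil : Ω → Matrix (Fin k) (Fin n) ℝ)
    (hEtil : ∀ ω, mvec (Etil ω) = (G₀⁻¹).mulVec (mvec (Em ω))) :
    ∀ r : Fin k × Fin k,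
      (∫ ω, ((Etil ω ⊗ₖ Em ω).mulVec (mvec W)) r)
        = σ2 * (((R1 (G₀⁻¹ᵀ))ᵀ).mulVec (mvec W)) r := by
  intro r
  have key : ∀ ω, ((Etil ω ⊗ₖ Em ω).mulVec (mvec W)) r
      = ∑ p : Fin n × Fin n, ∑ q : Fin n × Fin k,
          (G₀⁻¹ (p.1, r.1) q * mvec W p)
            * (mvec (Em ω) q * mvec (Em ω) (p.2, r.2)) := by
    intro ω
    have h1 : ∀ p₁ : Fin n, Etil ω r.1 p₁
        = ∑ q : Fin n × Fin k, G₀⁻¹ (p₁, r.1) q * mvec (Em ω) q := by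
      intro p₁
      have := congrFun (hEtil ω) (p₁, r.1)
      simpa [mvec, Matrix.mulVec, dotProduct] using this
    simp only [Matrix.mulVec, dotProduct, Matrix.kroneckerMap_apply]
    refine Finset.sum_congr rfl fun p _ => ?_
    rw [h1 p.1, Finset.sum_mul, Finset.sum_mul]
    refine Finset.sum_congr rfl fun q _ => ?_
    simp only [mvec]
    ring
  simp only [key]
  rw [integral_finset_sum _ (fun p _ => integrable_finset_sum _
      (fun q _ => (hint q (p.2, r.2)).const_mul _))]
  have : ∀ p : Fin n × Fin n,
      (∫ ω, ∑ q : Fin n × Fin k, (G₀⁻¹ (p.1, r.1) q * mvec W p)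
        * (mvec (Em ω) q * mvec (Em ω) (p.2, r.2)))
      = σ2 * (G₀⁻¹ (p.1, r.1) (p.2, r.2) * mvec W p) := by
    intro p
    rw [integral_finset_sum _ (fun q _ => (hint q (p.2, r.2)).const_mul _)]
    have : ∀ q : Fin n × Fin k,
        (∫ ω, (G₀⁻¹ (p.1, r.1) q * mvec W p)
          * (mvec (Em ω) q * mvec (Em ω) (p.2, r.2)))
        = (G₀⁻¹ (p.1, r.1) q * mvec W p) * (if q = (p.2, r.2) then σ2 else 0) := by
      intro q
      rw [integral_const_mul, hcov q (p.2, r.2)]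
    simp only [this, mul_ite, mul_zero]
    rw [Finset.sum_ite_eq' Finset.univ (p.2, r.2)]
    simp [mul_comm]
  simp only [this]
  rw [← Finset.mul_sum]
  simp [Matrix.mulVec, dotProduct, R1, Matrix.transpose_apply]
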